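/- Let (w^t) and (ẅ^t) be two sequences in ℝ^d with updates w^{t+1} = w^t - ηΣ_{i} α_i ĝ_i^t and ẅ^{t+1} = ẅ^t - ηΣ_i α_i ∇L_i(ẅ^t), where each L_i is μ-strongly convex and L-smooth, α_i ≥ 0 with Σα_i = 1, 0 < η ≤ min(1/μ, 1/L), and the estimated updates satisfy ‖ĝ_i^t - ∇L_i(w^t)‖ ≤ M for all i, t. Then for all t ≥ 0: ‖w^t - ẅ^t‖ ≤ (√(1-ημ))^t ‖w^0 - ẅ^0‖ + ηM·(1 - (√(1-ημ))^t)/(1 - √(1-ημ)). -/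

import Mathlib

/-!
Strong convexity makes each gradient map `∇L_i` strongly monotone, and smoothness together with
convexity makes it `1/L`-cocoercive (Baillon–Haddad). Expanding `‖d - η u‖²` with these two
inequalities shows that every exact gradient step `x ↦ x - η ∇L_i x` is a `√(1 - ημ)`-contraction
when `ηL ≤ 1`, hence so is the averaged step. The approximate step differs from the exact one by at
most `ηM`, so the distance `a_t = ‖w^t - ẅ^t‖` obeys `a_{t+1} ≤ √(1 - ημ) a_t + ηM`, which unrolls
to the geometric bound.
-/

open scoped RealInnerProductSpace
open Finset

section Convex

variable {E : Type*} [NormedAddCommGroup E] [InnerProductSpace ℝ E] {f : E → ℝ} {g : E → E}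

lemma strongMono_of_strongConvex {μ : ℝ}
    (hsc : ∀ x y, f x ≥ f y + ⟪g y, x - y⟫ + (μ / 2) * ‖x - y‖ ^ 2) (x y : E) :
    μ * ‖x - y‖ ^ 2 ≤ ⟪g x - g y, x - y⟫ := by
  have hxy := hsc x y
  have hyx := hsc y x
  rw [norm_sub_rev, ← neg_sub x y, inner_neg_right] at hyx
  rw [inner_sub_left]
  linarith

/-- The descent lemma evaluated at `x - L⁻¹ (g x - g y)`, bounded below by convexity. -/
lemma add_inner_add_sq_norm_sub_le_of_convex_of_smooth {L : ℝ} (hL : 0 < L)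
    (hconv : ∀ x y, f y + ⟪g y, x - y⟫ ≤ f x)
    (hsm : ∀ x y, f x ≤ f y + ⟪g y, x - y⟫ + (L / 2) * ‖x - y‖ ^ 2) (x y : E) :
    f y + ⟪g y, x - y⟫ + 1 / (2 * L) * ‖g x - g y‖ ^ 2 ≤ f x := by
  set u := g x - g y
  have hzx : x - L⁻¹ • u - x = -(L⁻¹ • u) := by abel
  have hzy : x - L⁻¹ • u - y = (x - y) - L⁻¹ • u := by abel
  have hupper := hsm (x - L⁻¹ • u) x
  have hlower := hconv (x - L⁻¹ • u) y
  rw [hzx, inner_neg_right, real_inner_smul_right, norm_neg, norm_smul, mul_pow,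
    Real.norm_of_nonneg (inv_nonneg.2 hL.le)] at hupper
  rw [hzy, inner_sub_right, real_inner_smul_right] at hlower
  have hu : ⟪g x, u⟫ - ⟪g y, u⟫ = ‖u‖ ^ 2 := by
    rw [← inner_sub_left, real_inner_self_eq_norm_sq]
  have hcoef : L / 2 * L⁻¹ ^ 2 = 1 / (2 * L) := by field_simp
  rw [← mul_assoc, hcoef] at hupper
  linear_combination hupper + hlower - L⁻¹ * hu

lemma cocoercive_of_convex_of_smooth {L : ℝ} (hL : 0 < L)
    (hconv : ∀ x y, f y + ⟪g y, x - y⟫ ≤ f x)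
    (hsm : ∀ x y, f x ≤ f y + ⟪g y, x - y⟫ + (L / 2) * ‖x - y‖ ^ 2) (x y : E) :
    ‖g x - g y‖ ^ 2 ≤ L * ⟪g x - g y, x - y⟫ := by
  have hxy := add_inner_add_sq_norm_sub_le_of_convex_of_smooth hL hconv hsm x y
  have hyx := add_inner_add_sq_norm_sub_le_of_convex_of_smooth hL hconv hsm y x
  rw [norm_sub_rev, ← neg_sub x y, inner_neg_right] at hyx
  have hsum : 1 / L * ‖g x - g y‖ ^ 2 ≤ ⟪g x - g y, x - y⟫ := by
    rw [inner_sub_left]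
    have : 1 / L = 2 * (1 / (2 * L)) := by field_simp
    rw [this]
    linarith
  rwa [div_mul_eq_mul_div, one_mul, div_le_iff₀' hL] at hsum

lemma norm_sub_smul_le_of_cocoercive {d u : E} {μ L η : ℝ} (hμ : 0 ≤ μ) (hη : 0 ≤ η)
    (hηL : η * L ≤ 1) (hημ : η * μ ≤ 1)
    (hmono : μ * ‖d‖ ^ 2 ≤ ⟪u, d⟫) (hcoco : ‖u‖ ^ 2 ≤ L * ⟪u, d⟫) :
    ‖d - η • u‖ ≤ √(1 - η * μ) * ‖d‖ := by
  have hinner : 0 ≤ ⟪u, d⟫ := (by positivity : 0 ≤ μ * ‖d‖ ^ 2).trans hmono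
  have hexpand : ‖d - η • u‖ ^ 2 = ‖d‖ ^ 2 - 2 * η * ⟪u, d⟫ + η ^ 2 * ‖u‖ ^ 2 := by
    rw [norm_sub_sq_real, real_inner_smul_right, norm_smul, Real.norm_of_nonneg hη,
      real_inner_comm]
    ring
  have hsq : ‖d - η • u‖ ^ 2 ≤ (√(1 - η * μ) * ‖d‖) ^ 2 := by
    rw [mul_pow, Real.sq_sqrt (by linarith), hexpand]
    have hstep : η ^ 2 * ‖u‖ ^ 2 ≤ η * ⟪u, d⟫ := by
      calc η ^ 2 * ‖u‖ ^ 2 ≤ η ^ 2 * (L * ⟪u, d⟫) := by gcongr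
        _ = η * (η * L) * ⟪u, d⟫ := by ring
        _ ≤ η * 1 * ⟪u, d⟫ := by gcongr
        _ = η * ⟪u, d⟫ := by ring
    nlinarith
  exact (pow_le_pow_iff_left₀ (norm_nonneg _) (by positivity) two_ne_zero).1 hsq

lemma gradientStep_contraction {μ L η : ℝ} (hμ : 0 ≤ μ) (hL : 0 < L) (hη : 0 ≤ η)
    (hηL : η * L ≤ 1) (hημ : η * μ ≤ 1)
    (hsc : ∀ x y, f x ≥ f y + ⟪g y, x - y⟫ + (μ / 2) * ‖x - y‖ ^ 2)
    (hsm : ∀ x y, f x ≤ f y + ⟪g y, x - y⟫ + (L / 2) * ‖x - y‖ ^ 2) (x y : E) :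
    ‖(x - η • g x) - (y - η • g y)‖ ≤ √(1 - η * μ) * ‖x - y‖ := by
  have hconv : ∀ x y, f y + ⟪g y, x - y⟫ ≤ f x := fun x y =>
    (le_add_of_nonneg_right (by positivity)).trans (hsc x y)
  rw [sub_sub_sub_comm, ← smul_sub]
  exact norm_sub_smul_le_of_cocoercive hμ hη hηL hημ (strongMono_of_strongConvex hsc x y)
    (cocoercive_of_convex_of_smooth hL hconv hsm x y)

end Convex

section Averaging

variable {E ι : Type*} [NormedAddCommGroup E] [NormedSpace ℝ E] {s : Finset ι} {α : ι → ℝ}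

lemma norm_sum_smul_le_of_norm_le {x : ι → E} {c : ℝ} (hα : ∀ i ∈ s, 0 ≤ α i)
    (hαsum : ∑ i ∈ s, α i = 1) (hx : ∀ i ∈ s, ‖x i‖ ≤ c) : ‖∑ i ∈ s, α i • x i‖ ≤ c :=
  mem_closedBall_zero_iff.1 <| (convex_closedBall 0 c).sum_mem hα hαsum fun i hi =>
    mem_closedBall_zero_iff.2 (hx i hi)

lemma norm_inexactStep_sub_step_le {G : ι → E → E} {ĝ : ι → E} {x y : E} {η r M : ℝ}
    (hα : ∀ i ∈ s, 0 ≤ α i) (hαsum : ∑ i ∈ s, α i = 1) (hη : 0 ≤ η)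
    (hcontr : ∀ i ∈ s, ‖(x - η • G i x) - (y - η • G i y)‖ ≤ r * ‖x - y‖)
    (herr : ∀ i ∈ s, ‖ĝ i - G i x‖ ≤ M) :
    ‖(x - η • ∑ i ∈ s, α i • ĝ i) - (y - η • ∑ i ∈ s, α i • G i y)‖ ≤ r * ‖x - y‖ + η * M := by
  have hconst : ∀ z : E, ∑ i ∈ s, α i • z = z := fun z => by rw [← sum_smul, hαsum, one_smul]
  have hsplit : (x - η • ∑ i ∈ s, α i • ĝ i) - (y - η • ∑ i ∈ s, α i • G i y) =
      ∑ i ∈ s, α i • ((x - η • G i x) - (y - η • G i y)) - η • ∑ i ∈ s, α i • (ĝ i - G i x) := by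
    simp only [smul_sub, sum_sub_distrib, hconst, smul_sum, smul_comm η (α _)]
    abel
  rw [hsplit]
  refine (norm_sub_le _ _).trans (add_le_add (norm_sum_smul_le_of_norm_le hα hαsum hcontr) ?_)
  rw [norm_smul, Real.norm_of_nonneg hη]
  exact mul_le_mul_of_nonneg_left (norm_sum_smul_le_of_norm_le hα hαsum herr) hη

end Averaging

lemma le_pow_mul_add_geom_of_le_mul_add {a : ℕ → ℝ} {r b : ℝ} (hr0 : 0 ≤ r) (hr1 : r ≠ 1)
    (h : ∀ t, a (t + 1) ≤ r * a t + b) (t : ℕ) :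
    a t ≤ r ^ t * a 0 + b * (1 - r ^ t) / (1 - r) := by
  induction t with
  | zero => simp
  | succ t ih =>
    have h1r : 1 - r ≠ 0 := sub_ne_zero.2 hr1.symm
    calc a (t + 1) ≤ r * (r ^ t * a 0 + b * (1 - r ^ t) / (1 - r)) + b :=
          (h t).trans (by gcongr)
      _ = r ^ (t + 1) * a 0 + b * (1 - r ^ (t + 1)) / (1 - r) := by
          field_simp
          ring

theorem unlearn_guard_bound_general
    {d k : ℕ} (Lf : Fin k → EuclideanSpace ℝ (Fin d) → ℝ)
    (G : Fin k → EuclideanSpace ℝ (Fin d) → EuclideanSpace ℝ (Fin d))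
    (α : Fin k → ℝ) (μ L η M : ℝ) (hμ : 0 < μ) (hL : 0 < L)
    (hsc : ∀ i w1 w2, Lf i w1 ≥ Lf i w2 + ⟪G i w2, w1 - w2⟫ + (μ / 2) * ‖w1 - w2‖ ^ 2)
    (hsm : ∀ i w1 w2, Lf i w1 ≤ Lf i w2 + ⟪G i w2, w1 - w2⟫ + (L / 2) * ‖w1 - w2‖ ^ 2)
    (hα : ∀ i, 0 ≤ α i) (hαsum : ∑ i, α i = 1)
    (hη : 0 < η) (hηL : η ≤ 1 / L) (hημ : η ≤ 1 / μ)
    (w v : ℕ → EuclideanSpace ℝ (Fin d))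
    (ghat : Fin k → ℕ → EuclideanSpace ℝ (Fin d))
    (hupd : ∀ t, w (t + 1) = w t - η • ∑ i, α i • ghat i t)
    (hupd' : ∀ t, v (t + 1) = v t - η • ∑ i, α i • G i (v t))
    (herr : ∀ i t, ‖ghat i t - G i (w t)‖ ≤ M) :
    ∀ t, ‖w t - v t‖ ≤ (Real.sqrt (1 - η * μ)) ^ t * ‖w 0 - v 0‖ +
      η * M * (1 - (Real.sqrt (1 - η * μ)) ^ t) / (1 - Real.sqrt (1 - η * μ)) := by
  have hηL' : η * L ≤ 1 := by rwa [le_div_iff₀ hL] at hηL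
  have hημ' : η * μ ≤ 1 := by rwa [le_div_iff₀ hμ] at hημ
  have hr1 : √(1 - η * μ) ≠ 1 := by
    rw [Ne, Real.sqrt_eq_one]
    nlinarith
  refine le_pow_mul_add_geom_of_le_mul_add (Real.sqrt_nonneg _) hr1 fun t => ?_
  rw [hupd, hupd']
  exact norm_inexactStep_sub_step_le (fun i _ => hα i) hαsum hη.le
    (fun i _ => gradientStep_contraction hμ.le hL hη.le hηL' hημ' (hsc i) (hsm i) _ _)
    (fun i _ => herr i t)

/-- Theorem 1: the discrepancy between the unlearned model (using approximate updates)
and the train-from-scratch model is bounded geometrically. -/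
theorem unlearn_guard_bound
    {d k : ℕ} (Lf : Fin k → EuclideanSpace ℝ (Fin d) → ℝ)
    (G : Fin k → EuclideanSpace ℝ (Fin d) → EuclideanSpace ℝ (Fin d))
    (α : Fin k → ℝ) (μ L η M : ℝ) (hμ : 0 < μ) (hL : 0 < L) (hM : 0 ≤ M)
    (hdiff : ∀ i w, HasGradientAt (Lf i) (G i w) w)
    (hsc : ∀ i w1 w2, Lf i w1 ≥ Lf i w2 + ⟪G i w2, w1 - w2⟫ + (μ / 2) * ‖w1 - w2‖ ^ 2)
    (hsm : ∀ i w1 w2, Lf i w1 ≤ Lf i w2 + ⟪G i w2, w1 - w2⟫ + (L / 2) * ‖w1 - w2‖ ^ 2)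
    (hα : ∀ i, 0 ≤ α i) (hαsum : ∑ i, α i = 1)
    (hη : 0 < η) (hηL : η ≤ 1 / L) (hημ : η ≤ 1 / μ)
    (w v : ℕ → EuclideanSpace ℝ (Fin d))
    (ghat : Fin k → ℕ → EuclideanSpace ℝ (Fin d))
    (hupd : ∀ t, w (t + 1) = w t - η • ∑ i, α i • ghat i t)
    (hupd' : ∀ t, v (t + 1) = v t - η • ∑ i, α i • G i (v t))
    (herr : ∀ i t, ‖ghat i t - G i (w t)‖ ≤ M) :
    ∀ t, ‖w t - v t‖ ≤ (Real.sqrt (1 - η * μ)) ^ t * ‖w 0 - v 0‖ +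
      η * M * (1 - (Real.sqrt (1 - η * μ)) ^ t) / (1 - Real.sqrt (1 - η * μ)) :=
  unlearn_guard_bound_general Lf G α μ L η M hμ hL hsc hsm hα hαsum hη hηL hημ w v ghat hupd hupd'
    herr
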